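/- arXiv:2102.10589 — 2 statements merged into one kernel-verified Lean document; each statement's English description precedes it below -/
import Mathlib

section
/- There is an absolute constant c > 0 such that for all reals Q ≥ 1 and Q_0 ≥ 1, Σ_{q ≤ Q} (1/q) · Σ_{d | q, d > Q_0} σ(d)²/φ(d) ≤ c·Q, where σ(d) = Σ_{k | d} k is the sum-of-divisors function and φ is Euler's totient function. In particular, Σ_{d ≤ t} σ(d)²/(d·φ(d)) ≤ c·t for all t ≥ 1. -/
open scoped BigOperators
open Finset MeasureTheory

/-- `e(t) = exp(2πit)`. -/
noncomputable def eC (t : ℝ) : ℂ := Complex.exp (2 * Real.pi * Complex.I * t)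

/-- Exponential sum `S_f(θ) = ∑_{n ≤ N} f(n) e(nθ)`. -/
noncomputable def expSum (N : ℕ) (f : ℕ → ℂ) (θ : ℝ) : ℂ :=
  ∑ n ∈ Finset.Icc 1 N, f n * eC (n * θ)

/-- The variance of `f` in arithmetic progressions. -/
noncomputable def variance (N : ℕ) (Q : ℝ) (f : ℕ → ℂ) : ℝ :=
  ∑ q ∈ Finset.Icc 1 ⌊Q⌋₊, ∑ h ∈ Nat.divisors q,
    ∑ a ∈ (Finset.range q).filter (fun a => Nat.gcd a q = h),
      (‖(∑ n ∈ (Finset.Icc 1 N).filter (fun n => n % q = a), f n)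
        - (1 / (Nat.totient (q / h) : ℂ)) *
          ∑ n ∈ (Finset.Icc 1 N).filter (fun n => Nat.gcd n q = h), f n‖) ^ 2

/-- Major arcs: points of `[0,1)` (representing ℝ/ℤ) admitting an approximation
`|θ - a/q| ≤ K/(qQ)` with `q ≤ K Q₀` and `(a,q)=1`. -/
def majorArcs (K Q0 Q : ℝ) : Set ℝ :=
  {θ : ℝ | ∃ q a : ℕ, 1 ≤ q ∧ (q : ℝ) ≤ K * Q0 ∧ Nat.gcd a q = 1 ∧
    |θ - (a : ℝ) / q| ≤ K / (q * Q)}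

/-- Minor arcs: the complement of the major arcs in `[0,1)` (representing ℝ/ℤ). -/
def minorArcs (K Q0 Q : ℝ) : Set ℝ := Set.Ico (0:ℝ) 1 \ majorArcs K Q0 Q

/-- `∫_𝔪 |S_f(θ)|² dθ`. -/
noncomputable def minorIntegral (K Q0 Q : ℝ) (N : ℕ) (f : ℕ → ℂ) : ℝ :=
  ∫ θ in minorArcs K Q0 Q, ‖expSum N f θ‖ ^ 2

/-- `ω(n)`, the number of distinct prime factors. -/
def smallOmega (n : ℕ) : ℕ := n.primeFactors.card

/-- `Ω(n)`, the number of prime factors counted with multiplicity. -/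
def bigOmega (n : ℕ) : ℕ := (Nat.primeFactorsList n).length

/-- Ramanujan sum `c_q(n)`. -/
noncomputable def ramanujanSum (q n : ℕ) : ℂ :=
  ∑ a ∈ (Finset.Icc 1 q).filter (fun a => Nat.gcd a q = 1), eC ((a : ℝ) * n / q)

/-- `n` is `y`-smooth if all its prime factors are at most `y`. -/
def IsSmooth (y : ℝ) (n : ℕ) : Prop := ∀ p : ℕ, p.Prime → p ∣ n → (p : ℝ) ≤ y

open Classical in
/-- Indicator function of the `y`-smooth numbers. -/
noncomputable def smoothIndicator (y : ℝ) (n : ℕ) : ℂ :=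
  if IsSmooth y n then 1 else 0

/-- The "Fourier class" 𝓕 of smooth functions. -/
structure FourierClass (φ : ℝ → ℝ) : Prop where
  smooth : ContDiff ℝ (⊤ : ℕ∞) φ
  supp : ∀ t : ℝ, t ∉ Set.Icc (0:ℝ) 1 → φ t = 0
  nonneg : ∀ t ∈ Set.Icc (0:ℝ) 1, 0 ≤ φ t
  le_one : ∀ t ∈ Set.Icc (0:ℝ) 1, φ t ≤ 1
  int_ge : (1:ℝ)/2 ≤ ∫ t in (0:ℝ)..1, φ t
  decay : ∀ A : ℝ, 0 < A → ∃ CA : ℝ, 0 < CA ∧ ∀ ξ : ℝ,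
    ‖∫ t : ℝ, (φ t : ℂ) * eC (-(ξ * t))‖ ≤ CA * (1 + |ξ|) ^ (-A)


namespace SigmaAux

noncomputable def hh (p : ℕ) : ℝ := ((p:ℝ)/((p:ℝ)-1))^3 - 1

lemma hh_nonneg {p : ℕ} (hp : p.Prime) : 0 ≤ hh p := by
  have h2 : (2:ℝ) ≤ p := by exact_mod_cast hp.two_le
  have h1 : (0:ℝ) < (p:ℝ) - 1 := by linarith
  have h : (1:ℝ) ≤ (p:ℝ)/((p:ℝ)-1) := by rw [le_div_iff₀ h1]; linarith
  have := one_le_pow₀ h (n := 3)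
  simp only [hh]; linarith

lemma hh_le {p : ℕ} (hp : p.Prime) : hh p ≤ 14 / p := by
  have h2 : (2:ℝ) ≤ p := by exact_mod_cast hp.two_le
  have h1 : (0:ℝ) < (p:ℝ) - 1 := by linarith
  set x := (p:ℝ) with hx
  have hx0 : 0 < x := by linarith
  have key : x^3 * x ≤ (x+14) * (x-1)^3 := by
    nlinarith [mul_nonneg (by linarith : (0:ℝ) ≤ x - 2) (by nlinarith : (0:ℝ) ≤ 11*x^2 - 17*x + 7)]
  have h3 : (x/(x-1))^3 ≤ 1 + 14/x := by
    rw [div_pow, div_le_iff₀ (by positivity)]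
    have he : (1 + 14/x) * (x-1)^3 = ((x+14)*(x-1)^3)/x := by field_simp
    rw [he, le_div_iff₀ hx0]
    nlinarith [key]
  simp only [hh]; linarith

noncomputable def ww (e : ℕ) : ℝ :=
  if Squarefree e then ∏ p ∈ e.primeFactors, hh p else 0

lemma ww_nonneg (e : ℕ) : 0 ≤ ww e := by
  unfold ww; split
  · exact Finset.prod_nonneg fun p hp => hh_nonneg (Nat.prime_of_mem_primeFactors hp)
  · exact le_refl _

lemma ww_sqrt_le (e : ℕ) : ww e * Real.sqrt e ≤ 14^44 := by
  unfold ww; split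
  case isFalse => simp
  case isTrue h =>
    have hsq : (∏ p ∈ e.primeFactors, hh p)^2 * (e:ℝ) ≤ ((14:ℝ)^44)^2 := by
      have hprod : ∏ p ∈ e.primeFactors, (p:ℝ) = (e:ℝ) := by
        rw [← Nat.cast_prod, Nat.prod_primeFactors_of_squarefree h]
      rw [← hprod, ← Finset.prod_pow, ← Finset.prod_mul_distrib]
      have step1 : ∏ p ∈ e.primeFactors, (hh p ^ 2 * (p:ℝ)) ≤
          ∏ p ∈ e.primeFactors, (196 / (p:ℝ)) := by
        apply Finset.prod_le_prod
        · intro p hp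
          have := Nat.prime_of_mem_primeFactors hp
          positivity
        · intro p hp
          have hp' := Nat.prime_of_mem_primeFactors hp
          have h2 : (2:ℝ) ≤ p := by exact_mod_cast hp'.two_le
          have hb := hh_le hp'
          have hn := hh_nonneg hp'
          have : hh p ^ 2 ≤ (14/(p:ℝ))^2 := by
            apply pow_le_pow_left₀ hn hb
          calc hh p ^2 * (p:ℝ) ≤ (14/(p:ℝ))^2 * p := by nlinarith
            _ = 196 / (p:ℝ) := by field_simp; ring
      refine step1.trans ?_
      rw [← Finset.prod_filter_mul_prod_filter_not e.primeFactors (fun p => p < 197)]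
      have hle1 : ∏ p ∈ e.primeFactors.filter (fun p => ¬ p < 197), (196 / (p:ℝ)) ≤ 1 := by
        apply Finset.prod_le_one
        · intro p hp
          have := (Nat.prime_of_mem_primeFactors (Finset.mem_filter.1 hp).1).two_le
          positivity
        · intro p hp
          have hp197 : (197:ℝ) ≤ p := by
            exact_mod_cast Nat.le_of_not_lt (Finset.mem_filter.1 hp).2
          rw [div_le_one (by linarith)]; linarith
      have hle2 : ∏ p ∈ e.primeFactors.filter (fun p => p < 197), (196 / (p:ℝ)) ≤ 196^44 := by
        have hcard : (e.primeFactors.filter (fun p => p < 197)).card ≤ 44 := by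
          have hsub : e.primeFactors.filter (fun p => p < 197) ⊆
              (Finset.range 197).filter Nat.Prime := by
            intro p hp
            rcases Finset.mem_filter.1 hp with ⟨hp1, hp2⟩
            exact Finset.mem_filter.2 ⟨Finset.mem_range.2 hp2, Nat.prime_of_mem_primeFactors hp1⟩
          have : ((Finset.range 197).filter Nat.Prime).card = 44 := by set_option maxRecDepth 100000 in decide
          exact le_trans (Finset.card_le_card hsub) (le_of_eq this)
        calc ∏ p ∈ e.primeFactors.filter (fun p => p < 197), (196 / (p:ℝ))
            ≤ ∏ p ∈ e.primeFactors.filter (fun p => p < 197), (196:ℝ) := by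
              apply Finset.prod_le_prod
              · intro p hp
                have := (Nat.prime_of_mem_primeFactors (Finset.mem_filter.1 hp).1).two_le
                positivity
              · intro p hp
                have h1 : (1:ℝ) ≤ p := by
                  exact_mod_cast (Nat.prime_of_mem_primeFactors (Finset.mem_filter.1 hp).1).one_lt.le
                rw [div_le_iff₀ (by linarith)]; nlinarith
          _ = (196:ℝ) ^ (e.primeFactors.filter (fun p => p < 197)).card := by
              rw [Finset.prod_const]
          _ ≤ 196^44 := by
              apply pow_le_pow_right₀ (by norm_num) hcard
      calc _ ≤ (∏ p ∈ e.primeFactors.filter (fun p => p < 197), (196 / (p:ℝ))) * 1 :=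
            mul_le_mul_of_nonneg_left hle1 (Finset.prod_nonneg (by
              intro p hp
              have := (Nat.prime_of_mem_primeFactors (Finset.mem_filter.1 hp).1).two_le
              positivity))
        _ ≤ 196^44 * 1 := by exact mul_le_mul_of_nonneg_right hle2 (by norm_num)
        _ = ((14:ℝ)^44)^2 := by norm_num
    have hw : 0 ≤ ∏ p ∈ e.primeFactors, hh p :=
      Finset.prod_nonneg fun p hp => hh_nonneg (Nat.prime_of_mem_primeFactors hp)
    set a := ∏ p ∈ e.primeFactors, hh p
    have : a * Real.sqrt e = Real.sqrt (a^2 * e) := by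
      rw [Real.sqrt_mul (by positivity), Real.sqrt_sq hw]
    rw [this]
    calc Real.sqrt (a^2 * e) ≤ Real.sqrt (((14:ℝ)^44)^2) := Real.sqrt_le_sqrt hsq
      _ = 14^44 := Real.sqrt_sq (by norm_num)

lemma factor_le {p v : ℕ} (hp : p.Prime) (hv : 1 ≤ v) :
    (∑ k ∈ Finset.range (v+1), (p:ℝ)^k)^2 / ((p:ℝ)^v * ((p:ℝ)^(v-1) * ((p:ℝ)-1)))
      ≤ 1 + hh p := by
  obtain ⟨u, rfl⟩ : ∃ u, v = u + 1 := ⟨v-1, (Nat.succ_pred_eq_of_pos hv).symm⟩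
  have h2 : (2:ℝ) ≤ p := by exact_mod_cast hp.two_le
  set x := (p:ℝ) with hx
  have hx1 : (0:ℝ) < x - 1 := by linarith
  have hx0 : (0:ℝ) < x := by linarith
  have h1h : 1 + hh p = x^3/(x-1)^3 := by
    simp only [hh, ← hx, ← div_pow]; ring
  rw [h1h]
  set A := ∑ k ∈ Finset.range (u+1+1), x^k with hA
  have hgeom : A * (x-1) = x^(u+1+1) - 1 := geom_sum_mul x (u+1+1)
  have hApos : 0 ≤ A := Finset.sum_nonneg fun k _ => by positivity
  have hD : (0:ℝ) < x^(u+1) * (x^(u+1-1) * (x-1)) := by positivity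
  rw [div_le_div_iff₀ hD (by positivity)]
  have hred : u + 1 - 1 = u := rfl
  rw [hred]
  have hxp : (0:ℝ) ≤ x^(u+1+1) - 1 := by
    have : (1:ℝ) ≤ x^(u+1+1) := one_le_pow₀ (by linarith)
    linarith
  have key : (x^(u+1+1) - 1)^2 ≤ (x^(u+1+1))^2 := by
    apply pow_le_pow_left₀ hxp; nlinarith [pow_pos hx0 (u+1+1)]
  calc A^2 * (x-1)^3 = (A*(x-1))^2 * (x-1) := by ring
    _ = (x^(u+1+1)-1)^2 * (x-1) := by rw [hgeom]
    _ ≤ (x^(u+1+1))^2 * (x-1) := by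
        exact mul_le_mul_of_nonneg_right key (le_of_lt hx1)
    _ = x^3 * (x^(u+1) * (x^u * (x-1))) := by ring

lemma ratio_le {d : ℕ} (hd : d ≠ 0) :
    (∑ k ∈ Nat.divisors d, (k:ℝ))^2 / ((d:ℝ) * (Nat.totient d : ℝ))
      ≤ ∏ p ∈ d.primeFactors, (1 + hh p) := by
  have h1 : (∑ k ∈ Nat.divisors d, (k:ℝ)) =
      ∏ p ∈ d.primeFactors, ∑ k ∈ Finset.range (d.factorization p + 1), (p:ℝ)^k := by
    rw [← Nat.cast_sum, Nat.sum_divisors hd]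
    push_cast; rfl
  have h2 : ((Nat.totient d : ℕ) : ℝ) =
      ∏ p ∈ d.primeFactors, ((p:ℝ)^(d.factorization p - 1) * ((p:ℝ)-1)) := by
    rw [Nat.totient_eq_prod_factorization hd, Finsupp.prod, Nat.support_factorization,
      Nat.cast_prod]
    apply Finset.prod_congr rfl
    intro p hp
    have hp2 : 1 ≤ p := (Nat.prime_of_mem_primeFactors hp).one_lt.le
    push_cast [Nat.cast_sub hp2]
    ring
  have h3 : (d:ℝ) = ∏ p ∈ d.primeFactors, (p:ℝ)^(d.factorization p) := by
    conv_lhs => rw [← Nat.factorization_prod_pow_eq_self hd]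
    rw [Finsupp.prod, Nat.support_factorization, Nat.cast_prod]
    push_cast; rfl
  rw [h1, h2, h3, ← Finset.prod_mul_distrib, ← Finset.prod_pow, ← Finset.prod_div_distrib]
  apply Finset.prod_le_prod
  · intro p hp
    have hp' := Nat.prime_of_mem_primeFactors hp
    have h2' : (2:ℝ) ≤ p := by exact_mod_cast hp'.two_le
    have hv : 1 ≤ d.factorization p := (Nat.Prime.factorization_pos_of_dvd hp' hd
      (Nat.dvd_of_mem_primeFactors hp))
    have hm : (0:ℝ) ≤ (p:ℝ) - 1 := by linarith
    exact div_nonneg (by positivity) (mul_nonneg (by positivity) (mul_nonneg (by positivity) hm))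
  · intro p hp
    have hp' := Nat.prime_of_mem_primeFactors hp
    have hv : 1 ≤ d.factorization p := (Nat.Prime.factorization_pos_of_dvd hp' hd
      (Nat.dvd_of_mem_primeFactors hp))
    exact factor_le hp' hv

lemma squarefree_prod_primes {t : Finset ℕ} (h : ∀ p ∈ t, p.Prime) :
    Squarefree (∏ p ∈ t, p) := by
  classical
  induction t using Finset.induction_on with
  | empty => simpa using squarefree_one
  | @insert a s ha ih =>
    rw [Finset.prod_insert ha]
    have hap : a.Prime := h a (Finset.mem_insert_self a s)
    have hcop : Nat.Coprime a (∏ p ∈ s, p) := by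
      apply Nat.Coprime.prod_right
      intro q hq
      exact (Nat.coprime_primes hap (h q (Finset.mem_insert_of_mem hq))).2
        (by rintro rfl; exact ha hq)
    exact (Nat.squarefree_mul hcop).2 ⟨hap.squarefree, ih fun p hp => h p (Finset.mem_insert_of_mem hp)⟩

lemma prod_one_add_le_sum_ww {d : ℕ} (hd : d ≠ 0) :
    ∏ p ∈ d.primeFactors, (1 + hh p) ≤ ∑ e ∈ Nat.divisors d, ww e := by
  classical
  have hexp : ∏ p ∈ d.primeFactors, (1 + hh p)
      = ∑ t ∈ d.primeFactors.powerset, ∏ p ∈ t, hh p := by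
    have := Finset.prod_add hh (fun _ => (1:ℝ)) d.primeFactors
    simp only [Finset.prod_const_one, mul_one] at this
    rw [← this]
    exact Finset.prod_congr rfl fun p _ => by ring
  rw [hexp]
  have hww : ∀ t ∈ d.primeFactors.powerset, ∏ p ∈ t, hh p = ww (∏ p ∈ t, p) := by
    intro t ht
    have hpr : ∀ p ∈ t, p.Prime := fun p hp =>
      Nat.prime_of_mem_primeFactors (Finset.mem_powerset.1 ht hp)
    rw [ww, if_pos (squarefree_prod_primes hpr), Nat.primeFactors_prod hpr]
  rw [Finset.sum_congr rfl hww]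
  rw [← Finset.sum_image (f := ww) (g := fun t => ∏ p ∈ t, p)
    (fun t ht s hs hts => by
      have hpr : ∀ p ∈ t, p.Prime := fun p hp =>
        Nat.prime_of_mem_primeFactors (Finset.mem_powerset.1 ht hp)
      have hps : ∀ p ∈ s, p.Prime := fun p hp =>
        Nat.prime_of_mem_primeFactors (Finset.mem_powerset.1 hs hp)
      have h2 := congrArg Nat.primeFactors hts
      rwa [Nat.primeFactors_prod hpr, Nat.primeFactors_prod hps] at h2)]
  apply Finset.sum_le_sum_of_subset_of_nonneg
  · intro e he
    rcases Finset.mem_image.1 he with ⟨t, ht, rfl⟩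
    refine Nat.mem_divisors.2 ⟨?_, hd⟩
    exact dvd_trans (Finset.prod_dvd_prod_of_subset _ _ _ (Finset.mem_powerset.1 ht))
      (Nat.prod_primeFactors_dvd d)
  · intro e _ _
    exact ww_nonneg e

lemma swap_divisor_sum {N : ℕ} (G : ℕ → ℕ → ℝ) :
    ∑ d ∈ Finset.Icc 1 N, ∑ e ∈ Nat.divisors d, G d e
      = ∑ e ∈ Finset.Icc 1 N, ∑ d ∈ (Finset.Icc 1 N).filter (fun d => e ∣ d), G d e := by
  apply Finset.sum_comm'
  intro d e
  constructor
  · rintro ⟨hd, he⟩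
    rcases Finset.mem_Icc.1 hd with ⟨hd1, hdN⟩
    rcases Nat.mem_divisors.1 he with ⟨hdvd, hne⟩
    have he1 : 1 ≤ e := Nat.pos_of_dvd_of_pos hdvd (by omega)
    exact ⟨Finset.mem_filter.2 ⟨hd, hdvd⟩,
      Finset.mem_Icc.2 ⟨he1, le_trans (Nat.le_of_dvd (by omega) hdvd) hdN⟩⟩
  · rintro ⟨hd, he⟩
    rcases Finset.mem_filter.1 hd with ⟨hd', hdvd⟩
    exact ⟨hd', Nat.mem_divisors.2 ⟨hdvd, by
      rcases Finset.mem_Icc.1 hd' with ⟨h1, _⟩; omega⟩⟩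

lemma sum_multiples {N e : ℕ} (he : 1 ≤ e) (g : ℕ → ℝ) :
    ∑ d ∈ (Finset.Icc 1 N).filter (fun d => e ∣ d), g d
      = ∑ k ∈ Finset.Icc 1 (N / e), g (e * k) := by
  apply Finset.sum_nbij' (i := fun d => d / e) (j := fun k => e * k)
  · intro d hd
    rcases Finset.mem_filter.1 hd with ⟨hd', hdvd⟩
    rcases Finset.mem_Icc.1 hd' with ⟨h1, h2⟩
    refine Finset.mem_Icc.2 ⟨?_, Nat.div_le_div_right h2⟩
    exact (Nat.one_le_div_iff (by omega)).2 (Nat.le_of_dvd (by omega) hdvd)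
  · intro k hk
    rcases Finset.mem_Icc.1 hk with ⟨h1, h2⟩
    refine Finset.mem_filter.2 ⟨Finset.mem_Icc.2 ⟨by nlinarith, ?_⟩, Dvd.intro k rfl⟩
    calc e * k ≤ e * (N / e) := Nat.mul_le_mul_left e h2
      _ ≤ N := Nat.mul_div_le N e
  · intro d hd
    rcases Finset.mem_filter.1 hd with ⟨_, hdvd⟩
    exact Nat.mul_div_cancel' hdvd
  · intro k hk
    exact Nat.mul_div_cancel_left k (by omega)
  · intro d hd
    rcases Finset.mem_filter.1 hd with ⟨_, hdvd⟩
    rw [Nat.mul_div_cancel' hdvd]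

lemma sum_inv_sqrt_le (M : ℕ) :
    ∑ k ∈ Finset.Icc 1 M, 1 / Real.sqrt k ≤ 2 * Real.sqrt M := by
  have hIcc : Finset.Icc 1 M = Finset.Ico 1 (M+1) := rfl
  rw [hIcc, Finset.sum_Ico_eq_sum_range]
  simp only [Nat.add_sub_cancel]
  have tele : ∑ i ∈ Finset.range M, (2*Real.sqrt ((i:ℝ)+1) - 2*Real.sqrt ((i:ℝ)))
      = 2 * Real.sqrt M := by
    have h := Finset.sum_range_sub (fun i : ℕ => 2*Real.sqrt (i:ℕ)) M
    push_cast at h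
    simpa using h
  rw [← tele]
  apply Finset.sum_le_sum
  intro i _
  have ha : Real.sqrt ((i:ℝ)+1) ^ 2 = (i:ℝ)+1 := Real.sq_sqrt (by positivity)
  have hb : Real.sqrt (i:ℝ) ^ 2 = (i:ℝ) := Real.sq_sqrt (by positivity)
  have hb0 : 0 ≤ Real.sqrt (i:ℝ) := Real.sqrt_nonneg _
  have ha0 : 0 < Real.sqrt ((i:ℝ)+1) := Real.sqrt_pos.2 (by positivity)
  have hcast : ((1 + i : ℕ) : ℝ) = (i:ℝ) + 1 := by push_cast; ring
  rw [show (1/Real.sqrt ((1+i : ℕ):ℝ)) = 1/Real.sqrt ((i:ℝ)+1) by rw [hcast]]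
  rw [div_le_iff₀ ha0]
  nlinarith [sq_nonneg (Real.sqrt ((i:ℝ)+1) - Real.sqrt (i:ℝ))]

lemma sum_inv_le (M : ℕ) :
    ∑ k ∈ Finset.Icc 1 M, 1 / (k:ℝ) ≤ 2 * Real.sqrt M := by
  refine le_trans (Finset.sum_le_sum ?_) (sum_inv_sqrt_le M)
  intro k hk
  rcases Finset.mem_Icc.1 hk with ⟨h1, _⟩
  have h1' : (1:ℝ) ≤ k := by exact_mod_cast h1
  have hs : Real.sqrt k ≤ k := by
    nlinarith [Real.sq_sqrt (by positivity : (0:ℝ) ≤ (k:ℝ)), Real.sqrt_nonneg (k:ℝ),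
      Real.sqrt_le_sqrt h1', Real.sqrt_one]
  exact one_div_le_one_div_of_le (by positivity) hs

noncomputable def Zc : ℝ := ∑' n : ℕ, ((n:ℝ)^((3:ℝ)/2))⁻¹

lemma Zc_summable : Summable (fun n : ℕ => ((n:ℝ)^((3:ℝ)/2))⁻¹) :=
  Real.summable_nat_rpow_inv.2 (by norm_num)

lemma Zc_nonneg : 0 ≤ Zc := tsum_nonneg fun n => by positivity

lemma wsum_le (N : ℕ) : ∑ e ∈ Finset.Icc 1 N, ww e / (e:ℝ) ≤ 14^44 * Zc := by
  have hpt : ∀ e ∈ Finset.Icc 1 N, ww e / (e:ℝ) ≤ 14^44 * ((e:ℝ)^((3:ℝ)/2))⁻¹ := by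
    intro e he
    rcases Finset.mem_Icc.1 he with ⟨h1, _⟩
    have he1 : (1:ℝ) ≤ e := by exact_mod_cast h1
    have hs : 0 < Real.sqrt e := Real.sqrt_pos.2 (by linarith)
    have h32 : ((e:ℝ))^((3:ℝ)/2) = (e:ℝ) * Real.sqrt e := by
      rw [show (3:ℝ)/2 = 1 + 1/2 by norm_num, Real.rpow_add (by linarith), Real.rpow_one,
        Real.sqrt_eq_rpow]
    rw [h32, mul_inv, ← mul_assoc]
    rw [div_le_iff₀ (by linarith : (0:ℝ) < (e:ℝ))] at *
    have := ww_sqrt_le e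
    calc ww e ≤ 14^44 / Real.sqrt e := by rw [le_div_iff₀ hs]; linarith
      _ = 14 ^ 44 * (↑e)⁻¹ * (Real.sqrt ↑e)⁻¹ * ↑e := by field_simp
  refine le_trans (Finset.sum_le_sum hpt) ?_
  rw [← Finset.mul_sum]
  apply mul_le_mul_of_nonneg_left _ (by norm_num : (0:ℝ) ≤ 14^44)
  exact Summable.sum_le_tsum _ (fun n _ => by positivity) Zc_summable

noncomputable def Wd (d : ℕ) : ℝ := ∑ e ∈ Nat.divisors d, ww e

lemma Wd_nonneg (d : ℕ) : 0 ≤ Wd d := Finset.sum_nonneg fun e _ => ww_nonneg e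

lemma pointwise_bound {d : ℕ} (hd : d ≠ 0) :
    (∑ k ∈ Nat.divisors d, (k:ℝ))^2 / ((d:ℝ) * (Nat.totient d : ℝ)) ≤ Wd d :=
  (ratio_le hd).trans (prod_one_add_le_sum_ww hd)

lemma part2_core (N : ℕ) :
    ∑ d ∈ Finset.Icc 1 N,
      ((∑ k ∈ Nat.divisors d, (k:ℝ)) ^ 2 / ((d:ℝ) * (Nat.totient d : ℝ)))
      ≤ (N:ℝ) * (14^44 * Zc) := by
  calc ∑ d ∈ Finset.Icc 1 N,
      ((∑ k ∈ Nat.divisors d, (k:ℝ)) ^ 2 / ((d:ℝ) * (Nat.totient d : ℝ)))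
      ≤ ∑ d ∈ Finset.Icc 1 N, ∑ e ∈ Nat.divisors d, ww e := by
        apply Finset.sum_le_sum
        intro d hd
        have hd0 : d ≠ 0 := by rcases Finset.mem_Icc.1 hd with ⟨h1, _⟩; omega
        exact pointwise_bound hd0
    _ = ∑ e ∈ Finset.Icc 1 N,
          ∑ d ∈ (Finset.Icc 1 N).filter (fun d => e ∣ d), ww e :=
        swap_divisor_sum (fun _ e => ww e)
    _ ≤ ∑ e ∈ Finset.Icc 1 N, (N:ℝ) * (ww e / e) := by
        apply Finset.sum_le_sum
        intro e he
        rcases Finset.mem_Icc.1 he with ⟨h1, _⟩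
        rw [sum_multiples h1 (fun _ => ww e), Finset.sum_const, nsmul_eq_mul,
          Nat.card_Icc]
        simp only [Nat.add_sub_cancel]
        have hcast : ((N / e : ℕ) : ℝ) ≤ (N:ℝ) / e := Nat.cast_div_le
        have he1 : (1:ℝ) ≤ (e:ℝ) := by exact_mod_cast h1
        calc ((N / e : ℕ) : ℝ) * ww e ≤ ((N:ℝ)/e) * ww e :=
              mul_le_mul_of_nonneg_right hcast (ww_nonneg e)
          _ = (N:ℝ) * (ww e / e) := by ring
    _ = (N:ℝ) * ∑ e ∈ Finset.Icc 1 N, ww e / e := by rw [Finset.mul_sum]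
    _ ≤ (N:ℝ) * (14^44 * Zc) :=
        mul_le_mul_of_nonneg_left (wsum_le N) (by positivity)

lemma part1_core (N : ℕ) :
    ∑ q ∈ Finset.Icc 1 N, (1/(q:ℝ)) *
      ∑ d ∈ Nat.divisors q, ((∑ k ∈ Nat.divisors d, (k:ℝ)) ^ 2 / (Nat.totient d : ℝ))
      ≤ (2*Real.sqrt N) * ((2*Real.sqrt N) * (14^44 * Zc)) := by
  have step1 : ∑ q ∈ Finset.Icc 1 N, (1/(q:ℝ)) *
      ∑ d ∈ Nat.divisors q, ((∑ k ∈ Nat.divisors d, (k:ℝ)) ^ 2 / (Nat.totient d : ℝ))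
      ≤ ∑ q ∈ Finset.Icc 1 N, ∑ d ∈ Nat.divisors q, (1/(q:ℝ)) * ((d:ℝ) * Wd d) := by
    apply Finset.sum_le_sum
    intro q hq
    rw [← Finset.mul_sum]
    apply mul_le_mul_of_nonneg_left _ (by positivity)
    apply Finset.sum_le_sum
    intro d hd
    have hdpos : 0 < d := Nat.pos_of_mem_divisors hd
    have hd0 : d ≠ 0 := hdpos.ne'
    have hφ : (0:ℝ) < (Nat.totient d : ℝ) := by
      exact_mod_cast Nat.totient_pos.2 hdpos
    have hdR : (0:ℝ) < (d:ℝ) := by exact_mod_cast hdpos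
    have key := pointwise_bound hd0
    calc (∑ k ∈ Nat.divisors d, (k:ℝ)) ^ 2 / (Nat.totient d : ℝ)
        = (d:ℝ) * ((∑ k ∈ Nat.divisors d, (k:ℝ)) ^ 2 / ((d:ℝ) * (Nat.totient d : ℝ))) := by
          rw [mul_div_assoc', mul_div_mul_left _ _ hdR.ne']
      _ ≤ (d:ℝ) * Wd d := mul_le_mul_of_nonneg_left key hdR.le
  refine step1.trans ?_
  rw [swap_divisor_sum (fun q d => (1/(q:ℝ)) * ((d:ℝ) * Wd d))]
  have step3 : ∀ d ∈ Finset.Icc 1 N,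
      ∑ q ∈ (Finset.Icc 1 N).filter (fun q => d ∣ q), (1/(q:ℝ)) * ((d:ℝ) * Wd d)
        ≤ (2*Real.sqrt N) * (Wd d / Real.sqrt d) := by
    intro d hd
    rcases Finset.mem_Icc.1 hd with ⟨h1, _⟩
    have hdR : (0:ℝ) < (d:ℝ) := by exact_mod_cast h1
    rw [sum_multiples h1 (fun q => (1/(q:ℝ)) * ((d:ℝ) * Wd d))]
    have heq : ∀ k ∈ Finset.Icc 1 (N/d), (1/((d*k : ℕ):ℝ)) * ((d:ℝ) * Wd d)
        = Wd d * (1/(k:ℝ)) := by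
      intro k hk
      rcases Finset.mem_Icc.1 hk with ⟨hk1, _⟩
      have hkR : (0:ℝ) < (k:ℝ) := by exact_mod_cast hk1
      push_cast
      field_simp
    rw [Finset.sum_congr rfl heq, ← Finset.mul_sum]
    have hH : ∑ k ∈ Finset.Icc 1 (N/d), 1/(k:ℝ) ≤ 2 * Real.sqrt ((N:ℝ)/d) := by
      refine (sum_inv_le (N/d)).trans ?_
      have : Real.sqrt ((N/d : ℕ):ℝ) ≤ Real.sqrt ((N:ℝ)/d) :=
        Real.sqrt_le_sqrt Nat.cast_div_le
      linarith
    have hsq : Real.sqrt ((N:ℝ)/d) = Real.sqrt N / Real.sqrt d :=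
      Real.sqrt_div (by positivity) _
    calc Wd d * ∑ k ∈ Finset.Icc 1 (N/d), 1/(k:ℝ)
        ≤ Wd d * (2 * Real.sqrt ((N:ℝ)/d)) :=
          mul_le_mul_of_nonneg_left hH (Wd_nonneg d)
      _ = (2*Real.sqrt N) * (Wd d / Real.sqrt d) := by rw [hsq]; ring
  refine (Finset.sum_le_sum step3).trans ?_
  rw [← Finset.mul_sum]
  apply mul_le_mul_of_nonneg_left _ (by positivity)
  -- ∑ d ∈ Icc 1 N, Wd d / √d ≤ 2√N * (14^44 * Zc)
  have expand : ∑ d ∈ Finset.Icc 1 N, Wd d / Real.sqrt d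
      = ∑ d ∈ Finset.Icc 1 N, ∑ e ∈ Nat.divisors d, ww e / Real.sqrt d := by
    apply Finset.sum_congr rfl
    intro d _
    rw [Wd, Finset.sum_div]
  rw [expand, swap_divisor_sum (fun d e => ww e / Real.sqrt d)]
  have step5 : ∀ e ∈ Finset.Icc 1 N,
      ∑ d ∈ (Finset.Icc 1 N).filter (fun d => e ∣ d), ww e / Real.sqrt d
        ≤ (2*Real.sqrt N) * (ww e / e) := by
    intro e he
    rcases Finset.mem_Icc.1 he with ⟨h1, _⟩
    have heR : (0:ℝ) < (e:ℝ) := by exact_mod_cast h1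
    have hse : 0 < Real.sqrt e := Real.sqrt_pos.2 heR
    rw [sum_multiples h1 (fun d => ww e / Real.sqrt d)]
    have heq : ∀ k ∈ Finset.Icc 1 (N/e), ww e / Real.sqrt ((e*k : ℕ):ℝ)
        = (ww e / Real.sqrt e) * (1/Real.sqrt (k:ℝ)) := by
      intro k hk
      push_cast
      rw [Real.sqrt_mul (by positivity)]
      field_simp
    rw [Finset.sum_congr rfl heq, ← Finset.mul_sum]
    have hH : ∑ k ∈ Finset.Icc 1 (N/e), 1/Real.sqrt (k:ℝ) ≤ 2 * Real.sqrt ((N:ℝ)/e) := by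
      refine (sum_inv_sqrt_le (N/e)).trans ?_
      have : Real.sqrt ((N/e : ℕ):ℝ) ≤ Real.sqrt ((N:ℝ)/e) :=
        Real.sqrt_le_sqrt Nat.cast_div_le
      linarith
    have hsq : Real.sqrt ((N:ℝ)/e) = Real.sqrt N / Real.sqrt e :=
      Real.sqrt_div (by positivity) _
    have hwnn : 0 ≤ ww e / Real.sqrt e := div_nonneg (ww_nonneg e) hse.le
    calc (ww e / Real.sqrt e) * ∑ k ∈ Finset.Icc 1 (N/e), 1/Real.sqrt (k:ℝ)
        ≤ (ww e / Real.sqrt e) * (2 * Real.sqrt ((N:ℝ)/e)) :=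
          mul_le_mul_of_nonneg_left hH hwnn
      _ = (2*Real.sqrt N) * (ww e / (Real.sqrt e * Real.sqrt e)) := by rw [hsq]; ring
      _ = (2*Real.sqrt N) * (ww e / e) := by rw [Real.mul_self_sqrt heR.le]
  refine (Finset.sum_le_sum step5).trans ?_
  rw [← Finset.mul_sum]
  exact mul_le_mul_of_nonneg_left (wsum_le N) (by positivity)

end SigmaAux

open Classical in
/-- `∑_{q ≤ Q} (1/q) ∑_{d ∣ q, d > Q₀} σ(d)²/φ(d) ≪ Q`, and
`∑_{d ≤ t} σ(d)²/(dφ(d)) ≪ t`. -/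
theorem sum_sigma_sq_div_totient_bound : ∃ c > (0:ℝ),
    (∀ Q Q0 : ℝ, 1 ≤ Q → 1 ≤ Q0 →
      ∑ q ∈ Finset.Icc 1 ⌊Q⌋₊, (1/(q:ℝ)) *
        ∑ d ∈ (Nat.divisors q).filter (fun d : ℕ => Q0 < (d:ℝ)),
          ((∑ k ∈ Nat.divisors d, (k:ℝ)) ^ 2 / (Nat.totient d : ℝ)) ≤ c * Q) ∧
    (∀ t : ℝ, 1 ≤ t →
      ∑ d ∈ Finset.Icc 1 ⌊t⌋₊,
        ((∑ k ∈ Nat.divisors d, (k:ℝ)) ^ 2 / ((d:ℝ) * (Nat.totient d : ℝ)))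
          ≤ c * t) := by
  refine ⟨4 * (14^44 * SigmaAux.Zc) + 1, ?_, ?_, ?_⟩
  · have := SigmaAux.Zc_nonneg
    nlinarith
  · intro Q Q0 hQ hQ0
    set N := ⌊Q⌋₊ with hN
    have hC : (0:ℝ) ≤ 14^44 * SigmaAux.Zc :=
      mul_nonneg (by norm_num) SigmaAux.Zc_nonneg
    have hNQ : (N:ℝ) ≤ Q := Nat.floor_le (by linarith)
    have step0 : ∑ q ∈ Finset.Icc 1 N, (1/(q:ℝ)) *
        ∑ d ∈ (Nat.divisors q).filter (fun d : ℕ => Q0 < (d:ℝ)),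
          ((∑ k ∈ Nat.divisors d, (k:ℝ)) ^ 2 / (Nat.totient d : ℝ))
        ≤ ∑ q ∈ Finset.Icc 1 N, (1/(q:ℝ)) *
        ∑ d ∈ Nat.divisors q,
          ((∑ k ∈ Nat.divisors d, (k:ℝ)) ^ 2 / (Nat.totient d : ℝ)) := by
      apply Finset.sum_le_sum
      intro q _
      apply mul_le_mul_of_nonneg_left _ (by positivity)
      apply Finset.sum_le_sum_of_subset_of_nonneg (Finset.filter_subset _ _)
      intro d _ _
      exact div_nonneg (sq_nonneg _) (Nat.cast_nonneg _)
    refine (step0.trans (SigmaAux.part1_core N)).trans ?_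
    have hsq : Real.sqrt (N:ℝ) * Real.sqrt (N:ℝ) = (N:ℝ) :=
      Real.mul_self_sqrt (by positivity)
    have heq : (2*Real.sqrt N) * ((2*Real.sqrt N) * (14^44 * SigmaAux.Zc))
        = 4 * (N:ℝ) * (14^44 * SigmaAux.Zc) := by
      rw [show (2*Real.sqrt N) * ((2*Real.sqrt N) * (14^44 * SigmaAux.Zc))
        = 4 * (Real.sqrt (N:ℝ) * Real.sqrt (N:ℝ)) * (14^44 * SigmaAux.Zc) by ring, hsq]
    rw [heq]
    have h1 : 4 * (N:ℝ) * (14^44 * SigmaAux.Zc) ≤ 4 * Q * (14^44 * SigmaAux.Zc) := by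
      apply mul_le_mul_of_nonneg_right _ hC
      linarith
    nlinarith
  · intro t ht
    have hC : (0:ℝ) ≤ 14^44 * SigmaAux.Zc :=
      mul_nonneg (by norm_num) SigmaAux.Zc_nonneg
    have hNt : ((⌊t⌋₊ : ℕ):ℝ) ≤ t := Nat.floor_le (by linarith)
    refine (SigmaAux.part2_core ⌊t⌋₊).trans ?_
    have h1 : ((⌊t⌋₊:ℕ):ℝ) * (14^44 * SigmaAux.Zc) ≤ t * (14^44 * SigmaAux.Zc) :=
      mul_le_mul_of_nonneg_right hNt hC
    nlinarith
end

section
/- There is an absolute constant c > 0 such that for every positive integer N, every prime number q, and every real number u, | Σ_{n ≤ N} c_q(n)·e(nu/N) | ≤ c·q·(1 + |u|). -/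
open scoped BigOperators
open Finset MeasureTheory

lemma eC_add (s t : ℝ) : eC (s + t) = eC s * eC t := by
  rw [eC, eC, eC, ← Complex.exp_add]; push_cast; ring_nf

lemma eC_nat (k : ℕ) : eC k = 1 := by
  rw [eC]
  have h : (2 * (Real.pi:ℂ) * Complex.I * (k:ℝ)) = (k:ℤ) * (2 * Real.pi * Complex.I) := by
    push_cast; ring
  rw [h, Complex.exp_int_mul_two_pi_mul_I]

lemma eC_pow (t : ℝ) (a : ℕ) : eC t ^ a = eC (a * t) := by
  rw [eC, eC, ← Complex.exp_nat_mul]; push_cast; ring_nf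

lemma abs_eC (t : ℝ) : ‖eC t‖ = 1 := by
  rw [eC]
  have h : (2 * (Real.pi:ℂ) * Complex.I * (t:ℝ)) = ((2 * Real.pi * t : ℝ):ℂ) * Complex.I := by
    push_cast; ring
  rw [h, Complex.norm_exp_ofReal_mul_I]

lemma abs_exp_I_sub_one (x : ℝ) : ‖Complex.exp (x * Complex.I) - 1‖ ≤ |x| := by
  have h : Complex.exp ((x:ℂ) * Complex.I) - 1
      = ((Real.cos x - 1 : ℝ) : ℂ) + ((Real.sin x : ℝ) : ℂ) * Complex.I := by
    rw [Complex.exp_mul_I, ← Complex.ofReal_cos, ← Complex.ofReal_sin]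
    push_cast
    ring
  rw [h]
  have hsq : ‖((Real.cos x - 1 : ℝ) : ℂ) + ((Real.sin x : ℝ) : ℂ) * Complex.I‖ ^ 2
      = (Real.cos x - 1)^2 + (Real.sin x)^2 := by
    rw [Complex.sq_norm, Complex.normSq_apply]
    simp [Complex.add_re, Complex.add_im, Complex.cos_ofReal_re, Complex.sin_ofReal_re]
    ring
  have h1 : Real.sin (x/2) ^ 2 = 1/2 - Real.cos x / 2 := by
    have := Real.sin_sq_eq_half_sub (x/2)
    rw [show 2*(x/2) = x by ring] at this
    exact this
  have h2 : |Real.sin (x/2)| ≤ |x/2| := Real.abs_sin_le_abs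
  have h3 := Real.sin_sq_add_cos_sq x
  nlinarith [norm_nonneg (((Real.cos x - 1 : ℝ) : ℂ) + ((Real.sin x : ℝ) : ℂ) * Complex.I),
    abs_nonneg x, sq_abs x, sq_abs (x/2), abs_nonneg (x/2), sq_abs (Real.sin (x/2)),
    mul_self_le_mul_self (abs_nonneg (Real.sin (x/2))) h2, abs_div x 2]


lemma sum_eC_range (q n : ℕ) (hq : 0 < q) :
    ∑ a ∈ Finset.range q, eC ((a:ℝ) * n / q) = if q ∣ n then (q:ℂ) else 0 := by
  have key : ∀ a : ℕ, eC ((a:ℝ) * n / q) = eC ((n:ℝ) / q) ^ a := by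
    intro a; rw [eC_pow]; congr 1; ring
  split_ifs with h
  · obtain ⟨m, rfl⟩ := h
    have h1 : ∀ a ∈ Finset.range q, eC ((a:ℝ) * ((q*m:ℕ):ℝ) / q) = 1 := by
      intro a _
      have hx : ((a:ℝ) * ((q*m:ℕ):ℝ) / q) = ((a*m : ℕ):ℝ) := by
        push_cast
        field_simp
      rw [hx, eC_nat]
    rw [Finset.sum_congr rfl h1]
    simp
  · have hqR : (q:ℝ) ≠ 0 := Nat.cast_ne_zero.mpr hq.ne'
    have hz : eC ((n:ℝ)/q) ≠ 1 := by
      intro hc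
      rw [eC, Complex.exp_eq_one_iff] at hc
      obtain ⟨k, hk⟩ := hc
      have h2I : (2 * (Real.pi:ℂ) * Complex.I) ≠ 0 := by
        simp [Complex.I_ne_zero, Real.pi_ne_zero, Complex.ofReal_ne_zero]
      have h2 : (((n:ℝ)/q : ℝ) : ℂ) = (k:ℂ) := by
        apply mul_left_cancel₀ h2I
        rw [hk]; ring
      have h3 : (n:ℝ)/q = (k:ℝ) := by exact_mod_cast h2
      have h4 : (n:ℝ) = (k:ℝ) * q := by
        field_simp at h3; linarith
      have h5 : (n:ℤ) = k * q := by exact_mod_cast h4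
      exact h (Int.natCast_dvd_natCast.mp ⟨k, by linarith⟩)
    simp_rw [key]
    rw [geom_sum_eq hz]
    have hpow : eC ((n:ℝ)/q) ^ q = 1 := by
      rw [eC_pow]
      have hx : (q:ℝ) * ((n:ℝ)/q) = ((n:ℕ):ℝ) := by field_simp
      rw [hx, eC_nat]
    rw [hpow]; simp

lemma ramanujanSum_prime (q : ℕ) (hq : q.Prime) (n : ℕ) :
    ramanujanSum q n = (if q ∣ n then (q:ℂ) else 0) - 1 := by
  have hset : (Finset.Icc 1 q).filter (fun a => Nat.gcd a q = 1) = Finset.Ico 1 q := by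
    ext a
    simp only [Finset.mem_filter, Finset.mem_Icc, Finset.mem_Ico]
    constructor
    · rintro ⟨⟨h1, h2⟩, hg⟩
      refine ⟨h1, lt_of_le_of_ne h2 ?_⟩
      rintro rfl
      rw [Nat.gcd_self] at hg
      exact hq.one_lt.ne' hg
    · rintro ⟨h1, h2⟩
      refine ⟨⟨h1, h2.le⟩, ?_⟩
      have : ¬ q ∣ a := Nat.not_dvd_of_pos_of_lt h1 h2
      have := (Nat.Prime.coprime_iff_not_dvd hq).mpr this
      exact Nat.Coprime.gcd_eq_one (Nat.Coprime.symm this)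
  have hins : Finset.range q = insert 0 (Finset.Ico 1 q) := by
    have hq0 := hq.pos
    ext a
    simp only [Finset.mem_range, Finset.mem_insert, Finset.mem_Ico]
    omega
  have hsum := sum_eC_range q n hq.pos
  rw [hins, Finset.sum_insert (by simp)] at hsum
  have h0 : eC (((0:ℕ):ℝ) * n / q) = 1 := by
    norm_num
    have : eC (((0:ℕ):ℝ)) = 1 := eC_nat 0
    simpa using this
  rw [ramanujanSum, hset]
  rw [h0] at hsum
  linear_combination hsum

lemma partial_sum_bound (q : ℕ) (hq : q.Prime) (m : ℕ) :
    ‖∑ n ∈ Finset.Icc 1 m, ramanujanSum q n‖ ≤ q := by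
  have hcard : ((Finset.Icc 1 m).filter (fun n => q ∣ n)).card = m / q := by
    have : Finset.Icc 1 m = Finset.Ioc 0 m := rfl
    rw [this]
    exact Nat.Ioc_filter_dvd_card_eq_div m q
  have hsum : ∑ n ∈ Finset.Icc 1 m, ramanujanSum q n
      = (q:ℂ) * ((m / q : ℕ):ℂ) - (m:ℂ) := by
    simp_rw [ramanujanSum_prime q hq]
    rw [Finset.sum_sub_distrib]
    rw [← Finset.sum_filter, Finset.sum_const, hcard, Finset.sum_const, Nat.card_Icc]
    simp only [nsmul_eq_mul, mul_one, mul_comm]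
    push_cast
    ring
  rw [hsum]
  have hd : q * (m / q) + m % q = m := Nat.div_add_mod m q
  have hc : (m:ℂ) = (q:ℂ) * ((m/q:ℕ):ℂ) + ((m % q:ℕ):ℂ) := by exact_mod_cast hd.symm
  have key : (q:ℂ) * ((m / q : ℕ):ℂ) - (m:ℂ) = ((-((m % q : ℕ):ℝ) : ℝ) : ℂ) := by
    rw [hc]; push_cast; ring
  rw [key, Complex.norm_real, Real.norm_eq_abs, abs_neg, abs_of_nonneg (by positivity)]
  exact_mod_cast (Nat.mod_lt m hq.pos).le


/-- `|∑_{n ≤ N} c_q(n) e(nu/N)| ≪ q(1+|u|)` for `q` prime. -/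
theorem ramanujan_exp_sum_bound : ∃ c > (0:ℝ), ∀ N : ℕ, 0 < N → ∀ q : ℕ, q.Prime →
    ∀ u : ℝ,
    ‖∑ n ∈ Finset.Icc 1 N, ramanujanSum q n * eC ((n:ℝ) * u / N)‖
      ≤ c * q * (1 + |u|) := by
  refine ⟨2 * Real.pi, by positivity, ?_⟩
  intro N hN q hq u
  have hNR : (0:ℝ) < N := by exact_mod_cast hN
  set F : ℕ → ℂ := fun i => eC ((i:ℝ) * u / N) with hF
  set g : ℕ → ℂ := fun i => if i = 0 then 0 else ramanujanSum q i with hg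
  -- rewrite the sum
  have hstep1 : ∑ n ∈ Finset.Icc 1 N, ramanujanSum q n * eC ((n:ℝ) * u / N)
      = ∑ i ∈ Finset.range (N+1), F i • g i := by
    have hins : Finset.range (N+1) = insert 0 (Finset.Icc 1 N) := by
      ext a
      simp only [Finset.mem_range, Finset.mem_insert, Finset.mem_Icc]
      omega
    rw [hins, Finset.sum_insert (by simp)]
    have hzero : F 0 • g 0 = 0 := by simp [hg]
    rw [hzero, zero_add]
    refine Finset.sum_congr rfl (fun i hi => ?_)
    have hi0 : i ≠ 0 := by
      simp only [Finset.mem_Icc] at hi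
      omega
    simp only [hg, hF, if_neg hi0, smul_eq_mul]
    ring
  -- partial sums of g
  have hG : ∀ k : ℕ, ∑ j ∈ Finset.range (k+1), g j = ∑ n ∈ Finset.Icc 1 k, ramanujanSum q n := by
    intro k
    have hins : Finset.range (k+1) = insert 0 (Finset.Icc 1 k) := by
      ext a
      simp only [Finset.mem_range, Finset.mem_insert, Finset.mem_Icc]
      omega
    rw [hins, Finset.sum_insert (by simp)]
    have : g 0 = 0 := by simp [hg]
    rw [this, zero_add]
    refine Finset.sum_congr rfl (fun i hi => ?_)
    have hi0 : i ≠ 0 := by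
      simp only [Finset.mem_Icc] at hi
      omega
    simp [hg, hi0]
  have hGabs : ∀ k : ℕ, ‖∑ j ∈ Finset.range (k+1), g j‖ ≤ q := by
    intro k; rw [hG k]; exact partial_sum_bound q hq k
  have hGabs' : ‖∑ j ∈ Finset.range (N+1), g j‖ ≤ q := hGabs N
  -- Abel summation
  have hparts := Finset.sum_range_by_parts F g (N+1)
  simp only [Nat.add_sub_cancel] at hparts
  rw [hstep1, hparts]
  -- bound the difference terms
  have habsF : ∀ i : ℕ, ‖F i‖ = 1 := fun i => abs_eC _
  have hdiff : ∀ i : ℕ, ‖F (i+1) - F i‖ ≤ 2 * Real.pi * |u| / N := by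
    intro i
    have harg : ((i+1 : ℕ):ℝ) * u / N = (i:ℝ) * u / N + u / N := by
      push_cast; ring
    have hfe : F (i+1) = F i * eC (u / N) := by
      simp only [hF]
      rw [harg, eC_add]
    rw [hfe]
    have : F i * eC (u/N) - F i = F i * (eC (u/N) - 1) := by ring
    rw [this, norm_mul, habsF i, one_mul]
    have hx : eC (u/N) - 1 = Complex.exp (((2 * Real.pi * (u/N)) : ℝ) * Complex.I) - 1 := by
      rw [eC]
      congr 2
      push_cast; ring
    rw [hx]
    calc ‖Complex.exp (((2 * Real.pi * (u/N)) : ℝ) * Complex.I) - 1‖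
        ≤ |2 * Real.pi * (u/N)| := abs_exp_I_sub_one _
      _ = 2 * Real.pi * |u| / N := by
          rw [abs_mul, abs_div, abs_of_nonneg hNR.le, abs_of_nonneg (by positivity : (0:ℝ) ≤ 2 * Real.pi)]
          ring
  calc ‖F N • ∑ i ∈ Finset.range (N+1), g i
        - ∑ i ∈ Finset.range N, (F (i+1) - F i) • ∑ j ∈ Finset.range (i+1), g j‖
      ≤ ‖F N • ∑ i ∈ Finset.range (N+1), g i‖
        + ‖∑ i ∈ Finset.range N, (F (i+1) - F i) • ∑ j ∈ Finset.range (i+1), g j‖ := by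
        exact (norm_sub_le _ _)
    _ ≤ (q:ℝ) + N * (2 * Real.pi * |u| / N * q) := by
        gcongr
        · rw [smul_eq_mul, norm_mul, habsF N, one_mul]
          exact hGabs'
        · calc ‖∑ i ∈ Finset.range N, (F (i+1) - F i) • ∑ j ∈ Finset.range (i+1), g j‖
              ≤ ∑ i ∈ Finset.range N, ‖(F (i+1) - F i) • ∑ j ∈ Finset.range (i+1), g j‖ := by
                exact norm_sum_le _ _
            _ ≤ ∑ i ∈ Finset.range N, (2 * Real.pi * |u| / N * q) := by
                refine Finset.sum_le_sum (fun i _ => ?_)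
                rw [smul_eq_mul, norm_mul]
                exact mul_le_mul (hdiff i) (hGabs i) (norm_nonneg _) (by positivity)
            _ = N * (2 * Real.pi * |u| / N * q) := by
                rw [Finset.sum_const, Finset.card_range, nsmul_eq_mul]
    _ ≤ 2 * Real.pi * q * (1 + |u|) := by
        have hq1 : (1:ℝ) ≤ q := by exact_mod_cast hq.one_lt.le
        have hpi : (1:ℝ) ≤ 2 * Real.pi := by nlinarith [Real.pi_gt_three]
        have hcancel : (N:ℝ) * (2 * Real.pi * |u| / N * q) = 2 * Real.pi * |u| * q := by
          field_simp
        rw [hcancel]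
        nlinarith [abs_nonneg u, Real.pi_gt_three]
end
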